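/- Fix δ > 1 and t > 0. For every integer p ≥ 1, with a = δ + 2p/(p²+1), b = p + (p²+1)δ, c = 1/p, d = (p²+1)/p, the quantity (e^{2t}d² + b² + (p⁴ + p² + 1)(e^{2t}c² + a²))/(2p·e^t) is ≥ e^t. -/

import Mathlib

theorem stmt_13 (δ : ℝ) (hδ : 1 < δ) (t : ℝ) (ht : 0 < t) (p : ℕ) (hp : 1 ≤ p) :
    (Real.exp (2 * t) * ((p ^ 2 + 1) / p : ℝ) ^ 2 + ((p : ℝ) + (p ^ 2 + 1) * δ) ^ 2
        + ((p : ℝ) ^ 4 + p ^ 2 + 1)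
          * (Real.exp (2 * t) * (1 / p : ℝ) ^ 2 + (δ + 2 * p / (p ^ 2 + 1)) ^ 2))
      / (2 * p * Real.exp t) ≥ Real.exp t := by
  have hp' : (1 : ℝ) ≤ (p : ℝ) := by exact_mod_cast hp
  have hp0 : (0 : ℝ) < (p : ℝ) := by linarith
  have hx : (0 : ℝ) < Real.exp t := Real.exp_pos t
  have hx2 : Real.exp (2 * t) = Real.exp t ^ 2 := by
    rw [two_mul, Real.exp_add, sq]
  set x := Real.exp t with hxdef
  rw [ge_iff_le, le_div_iff₀ (by positivity), hx2]
  have h1 : (0:ℝ) ≤ ((p : ℝ) + (p ^ 2 + 1) * δ) ^ 2 := sq_nonneg _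
  have h2 : (0:ℝ) ≤ ((p:ℝ) ^ 4 + p ^ 2 + 1) * (δ + 2 * p / (p ^ 2 + 1)) ^ 2 := by positivity
  have hpsq : (0:ℝ) < (p:ℝ)^2 := by positivity
  have hcomb : x ^ 2 * (((p:ℝ) ^ 2 + 1) / p) ^ 2
      + ((p:ℝ) ^ 4 + p ^ 2 + 1) * (x ^ 2 * (1 / p) ^ 2)
      = (x ^ 2 * (((p:ℝ) ^ 2 + 1) ^ 2 + ((p:ℝ) ^ 4 + p ^ 2 + 1))) / p ^ 2 := by
    field_simp
  have key : x * (2 * p * x) ≤ x ^ 2 * (((p:ℝ) ^ 2 + 1) / p) ^ 2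
      + ((p:ℝ) ^ 4 + p ^ 2 + 1) * (x ^ 2 * (1 / p) ^ 2) := by
    rw [hcomb, le_div_iff₀ hpsq]
    nlinarith [sq_nonneg x, mul_pos hx hx, sq_nonneg ((p:ℝ) - 1),
      mul_nonneg (mul_nonneg (le_of_lt (mul_pos hx hx)) (le_of_lt hp0))
        (mul_nonneg (sub_nonneg.2 hp') (le_of_lt hp0))]
  nlinarith [key]
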